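/- arXiv:2404.02108 — 8 statements merged into one kernel-verified Lean document; each statement's English description precedes it below -/
import Mathlib

section
/- Let q ∈ [0,1] and define η_t = (2/(t+2))^q for every nonnegative integer t. Then for every nonnegative integer t, η_t · (1 − η_{t+1}) ≤ η_{t+1}, and for every positive integer T, the product ∏_{t=0}^{T−1} (1 − η_{t+1}) ≤ η_T. -/
open Finset in
theorem eta_product_bound (q : ℝ) (hq0 : 0 ≤ q) (hq1 : q ≤ 1)
    (η : ℕ → ℝ) (hη : ∀ t : ℕ, η t = (2 / ((t : ℝ) + 2)) ^ q) :
    (∀ t : ℕ, η t * (1 - η (t + 1)) ≤ η (t + 1)) ∧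
    (∀ T : ℕ, 1 ≤ T → ∏ t ∈ Finset.range T, (1 - η (t + 1)) ≤ η T) := by
  have hx : ∀ t : ℕ, (0:ℝ) < 2 / ((t:ℝ) + 2) := by intro t; positivity
  have hx1 : ∀ t : ℕ, 2 / ((t:ℝ) + 2) ≤ 1 := by
    intro t
    rw [div_le_one (by positivity)]
    have : (0:ℝ) ≤ (t:ℝ) := Nat.cast_nonneg t
    linarith
  have hle1 : ∀ t, η t ≤ 1 := by
    intro t; rw [hη]; exact Real.rpow_le_one (le_of_lt (hx t)) (hx1 t) hq0
  have hxle : ∀ t : ℕ, 2 / ((t:ℝ) + 2) ≤ η t := by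
    intro t; rw [hη]
    calc 2 / ((t:ℝ) + 2) = (2 / ((t:ℝ) + 2)) ^ (1:ℝ) := (Real.rpow_one _).symm
    _ ≤ (2 / ((t:ℝ) + 2)) ^ q := Real.rpow_le_rpow_of_exponent_ge (hx t) (hx1 t) hq1
  have key : ∀ t : ℕ, η t * (1 - η (t + 1)) ≤ η (t + 1) := by
    intro t
    have ht2 : (0:ℝ) < (t:ℝ) + 2 := by positivity
    have ht3 : (0:ℝ) < (t:ℝ) + 3 := by positivity
    have hηt : η t = (2 / ((t:ℝ) + 2)) ^ q := hη t
    have hηt1 : η (t + 1) = (2 / ((t:ℝ) + 3)) ^ q := by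
      rw [hη]; push_cast; ring_nf
    set x : ℝ := 2 / ((t:ℝ) + 2) with hxdef
    set y : ℝ := 2 / ((t:ℝ) + 3) with hydef
    set r : ℝ := ((t:ℝ) + 3) / ((t:ℝ) + 2) with hrdef
    have hy0 : (0:ℝ) < y := by positivity
    have hr0 : (0:ℝ) ≤ r := by positivity
    have hxyr : x = y * r := by
      rw [hxdef, hydef, hrdef]; field_simp
    have hmul : x ^ q = y ^ q * r ^ q := by
      rw [hxyr, Real.mul_rpow hy0.le hr0]
    have hr1 : (1:ℝ) ≤ r := by
      rw [hrdef, le_div_iff₀ ht2]; linarith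
    have hrq : r ^ q ≤ r := by
      calc r ^ q ≤ r ^ (1:ℝ) := Real.rpow_le_rpow_of_exponent_le hr1 hq1
      _ = r := Real.rpow_one r
    have hrx : r ≤ 1 + x ^ q := by
      have h1 : r = 1 + 1 / ((t:ℝ) + 2) := by rw [hrdef]; field_simp; ring
      have h2 : 1 / ((t:ℝ) + 2) ≤ x := by
        rw [hxdef, div_le_div_iff₀ ht2 ht2]; linarith
      have h3 : x ≤ x ^ q := by rw [← hηt] at *; exact hxle t
      linarith
    have hkey : x ^ q ≤ y ^ q * (1 + x ^ q) := by
      rw [hmul]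
      have : r ^ q ≤ 1 + x ^ q := le_trans hrq hrx
      have hyq : (0:ℝ) < y ^ q := Real.rpow_pos_of_pos hy0 q
      nlinarith
    rw [hηt, hηt1]
    nlinarith [hkey]
  refine ⟨key, ?_⟩
  intro T hT
  induction T with
  | zero => omega
  | succ n ih =>
    rcases Nat.lt_or_ge n 1 with hn | hn
    · interval_cases n
      have hp : ∏ t ∈ Finset.range 1, (1 - η (t + 1)) = 1 - η 1 := by simp
      rw [hp]
      have := hxle 1
      norm_num at this
      linarith
    · rw [Finset.prod_range_succ]
      have h1 : 0 ≤ 1 - η (n + 1) := by linarith [hle1 (n + 1)]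
      calc (∏ t ∈ Finset.range n, (1 - η (t + 1))) * (1 - η (n + 1))
          ≤ η n * (1 - η (n + 1)) := mul_le_mul_of_nonneg_right (ih hn) h1
        _ ≤ η (n + 1) := key n
end

section
/- Let a > 0, let ξ be a positive integer, and let {r_t}_{t≥0} be a nonnegative real sequence satisfying r_{t+1} − r_t ≤ −a·α_t·r_t + ν_t for all integers t ≥ 0, where {α_t} and {ν_t} are nonnegative sequences with a·α_t ≤ 1 for all t. If α_t = 2/(a(t+ξ)), then for all integers t_0 ≥ 1 and T ≥ 1 (with t_0 ≤ T), r_T ≤ (t_0+ξ−1)²·r_{t_0}/(T+ξ−1)² + (∑_{t=0}^{T−1} ν_t·(t+ξ)²)/(T+ξ−1)². -/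
/-!
Multiplying the recursion by `(t + ξ)²` and using `(t + ξ)² - 2 (t + ξ) ≤ (t + ξ - 1)²` shows that
`u t = (t + ξ - 1)² r t` satisfies `u (t + 1) ≤ u t + ν t (t + ξ)²`; summing this telescoping
inequality from `t₀` to `T` and dividing by `(T + ξ - 1)²` gives the bound.
-/

open Finset

theorem le_add_sum_Ico_of_succ_le_add {u c : ℕ → ℝ} (h : ∀ t, u (t + 1) ≤ u t + c t)
    {t₀ T : ℕ} (hT : t₀ ≤ T) : u T ≤ u t₀ + ∑ t ∈ Ico t₀ T, c t := by
  induction T, hT using Nat.le_induction with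
  | base => simp
  | succ n hn ih =>
    rw [sum_Ico_succ_top hn]
    linarith [h n]

theorem mul_sq_le_of_le_one_sub_two_div {r r' ν x : ℝ} (hr : 0 ≤ r)
    (h : r' ≤ (1 - 2 / x) * r + ν) : r' * x ^ 2 ≤ (x - 1) ^ 2 * r + ν * x ^ 2 := by
  rcases eq_or_ne x 0 with rfl | hx
  · simpa using hr
  have hquad : (1 - 2 / x) * x ^ 2 ≤ (x - 1) ^ 2 := by
    field_simp
    nlinarith
  calc r' * x ^ 2 ≤ ((1 - 2 / x) * r + ν) * x ^ 2 := by gcongr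
    _ = (1 - 2 / x) * x ^ 2 * r + ν * x ^ 2 := by ring
    _ ≤ (x - 1) ^ 2 * r + ν * x ^ 2 := by gcongr

open Finset in
theorem aux_recursion_unroll_general (a : ℝ) (ha : 0 < a) (ξ : ℕ) (hξ : 1 ≤ ξ)
    (r α ν : ℕ → ℝ)
    (hr : ∀ t : ℕ, 0 ≤ r t) (hν : ∀ t : ℕ, 0 ≤ ν t)
    (hstep : ∀ t : ℕ, r (t + 1) - r t ≤ -a * α t * r t + ν t)
    (hαdef : ∀ t : ℕ, α t = 2 / (a * ((t : ℝ) + ξ)))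
    (t₀ T : ℕ) (hT : 1 ≤ T) (h : t₀ ≤ T) :
    r T ≤ ((t₀ : ℝ) + ξ - 1) ^ 2 * r t₀ / ((T : ℝ) + ξ - 1) ^ 2 +
      (∑ t ∈ Finset.range T, ν t * ((t : ℝ) + ξ) ^ 2) / ((T : ℝ) + ξ - 1) ^ 2 := by
  set c : ℕ → ℝ := fun t ↦ ν t * ((t : ℝ) + ξ) ^ 2
  have hunroll : ∀ t : ℕ, ((t + 1 : ℕ) + ξ - 1 : ℝ) ^ 2 * r (t + 1) ≤
      ((t : ℝ) + ξ - 1) ^ 2 * r t + c t := by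
    intro t
    have hrec : r (t + 1) ≤ (1 - 2 / ((t : ℝ) + ξ)) * r t + ν t := by
      have hcancel : a * α t = 2 / ((t : ℝ) + ξ) := by
        rw [hαdef, mul_div_assoc', mul_div_mul_left _ _ ha.ne']
      have hstep' := hstep t
      rw [neg_mul, hcancel] at hstep'
      linarith
    push_cast
    linarith [mul_sq_le_of_le_one_sub_two_div (hr t) hrec]
  have hsum : ∑ t ∈ Ico t₀ T, c t ≤ ∑ t ∈ range T, c t := by
    rw [range_eq_Ico]
    exact sum_le_sum_of_subset_of_nonneg (Ico_subset_Ico_left (Nat.zero_le _))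
      fun t _ _ ↦ mul_nonneg (hν t) (sq_nonneg _)
  have hpos : (0 : ℝ) < ((T : ℝ) + ξ - 1) ^ 2 := by
    have : (1 : ℝ) ≤ T := by exact_mod_cast hT
    have : (1 : ℝ) ≤ ξ := by exact_mod_cast hξ
    exact pow_pos (by linarith) 2
  rw [← add_div, le_div_iff₀ hpos]
  linarith [le_add_sum_Ico_of_succ_le_add (u := fun t ↦ ((t : ℝ) + ξ - 1) ^ 2 * r t) hunroll h]

open Finset in
theorem aux_recursion_unroll (a : ℝ) (ha : 0 < a) (ξ : ℕ) (hξ : 1 ≤ ξ)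
    (r α ν : ℕ → ℝ)
    (hr : ∀ t : ℕ, 0 ≤ r t) (hα : ∀ t : ℕ, 0 ≤ α t) (hν : ∀ t : ℕ, 0 ≤ ν t)
    (hstep : ∀ t : ℕ, r (t + 1) - r t ≤ -a * α t * r t + ν t)
    (haα : ∀ t : ℕ, a * α t ≤ 1)
    (hαdef : ∀ t : ℕ, α t = 2 / (a * ((t : ℝ) + ξ)))
    (t₀ T : ℕ) (ht₀ : 1 ≤ t₀) (hT : 1 ≤ T) (h : t₀ ≤ T) :
    r T ≤ ((t₀ : ℝ) + ξ - 1) ^ 2 * r t₀ / ((T : ℝ) + ξ - 1) ^ 2 +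
      (∑ t ∈ Finset.range T, ν t * ((t : ℝ) + ξ) ^ 2) / ((T : ℝ) + ξ - 1) ^ 2 :=
  aux_recursion_unroll_general a ha ξ hξ r α ν hr hν hstep hαdef t₀ T hT h
end

section
/- Let d be a positive integer and let ∇J ∈ ℝ^d, d_k ∈ ℝ^d with d_k ≠ 0, and set ê = d_k − ∇J. If ‖ê‖ ≤ (1/2)‖∇J‖, then −⟨∇J, d_k⟩/‖d_k‖ ≤ −(1/3)‖∇J‖. -/
/-! Writing `d = g + e`, the inner product `⟪g, d⟫ = ‖g‖² + ⟪g, e⟫` is at least `‖g‖²/2` by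
Cauchy–Schwarz, while `‖d‖ ≤ ‖g‖ + ‖e‖ ≤ 3‖g‖/2`; dividing gives `⟪g, d⟫ / ‖d‖ ≥ ‖g‖/3`. -/

section InnerProductSpace

variable {E : Type*} [NormedAddCommGroup E] [InnerProductSpace ℝ E]

theorem sq_norm_sub_norm_mul_norm_sub_le_real_inner (g d : E) :
    ‖g‖ ^ 2 - ‖g‖ * ‖d - g‖ ≤ inner ℝ g d := by
  have hsplit : inner ℝ g d = ‖g‖ ^ 2 + inner ℝ g (d - g) := by
    rw [inner_sub_right, real_inner_self_eq_norm_sq]; ring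
  have hcs : -(‖g‖ * ‖d - g‖) ≤ inner ℝ g (d - g) :=
    neg_le_of_abs_le (abs_real_inner_le_norm g (d - g))
  linarith

theorem norm_mul_norm_le_three_mul_real_inner {g d : E} (h : ‖d - g‖ ≤ 1 / 2 * ‖g‖) :
    ‖g‖ * ‖d‖ ≤ 3 * inner ℝ g d := by
  have hinner := sq_norm_sub_norm_mul_norm_sub_le_real_inner g d
  have hnorm := norm_le_norm_add_norm_sub' d g
  nlinarith [norm_nonneg g, norm_nonneg (d - g)]

end InnerProductSpace

theorem normalized_descent_small_error_general (d : ℕ)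
    (gradJ dk : EuclideanSpace ℝ (Fin d)) (hdk : dk ≠ 0)
    (h : ‖dk - gradJ‖ ≤ (1 / 2) * ‖gradJ‖) :
    -inner ℝ gradJ dk / ‖dk‖ ≤ -(1 / 3) * ‖gradJ‖ := by
  have hdk_pos : 0 < ‖dk‖ := norm_pos_iff.mpr hdk
  rw [neg_mul, neg_div, neg_le_neg_iff, le_div_iff₀ hdk_pos]
  linarith [norm_mul_norm_le_three_mul_real_inner h]

theorem normalized_descent_small_error (d : ℕ) (hd : 0 < d)
    (gradJ dk : EuclideanSpace ℝ (Fin d)) (hdk : dk ≠ 0)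
    (h : ‖dk - gradJ‖ ≤ (1 / 2) * ‖gradJ‖) :
    -inner ℝ gradJ dk / ‖dk‖ ≤ -(1 / 3) * ‖gradJ‖ :=
  normalized_descent_small_error_general d gradJ dk hdk h
end

section
/- Let d be a positive integer and let ∇J ∈ ℝ^d, d_k ∈ ℝ^d with d_k ≠ 0, and set ê = d_k − ∇J. If ‖ê‖ ≥ (1/2)‖∇J‖, then −⟨∇J, d_k⟩/‖d_k‖ ≤ −(1/3)‖∇J‖ + (8/3)‖ê‖. -/
theorem neg_real_inner_div_norm_le {E : Type*} [NormedAddCommGroup E] [InnerProductSpace ℝ E]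
    (x y : E) : -inner ℝ x y / ‖y‖ ≤ ‖x‖ :=
  div_le_of_le_mul₀ (norm_nonneg y) (norm_nonneg x) <| by
    simpa only [inner_neg_right, norm_neg] using real_inner_le_norm x (-y)

theorem normalized_descent_large_error_general (d : ℕ)
    (gradJ dk : EuclideanSpace ℝ (Fin d))
    (h : (1 / 2) * ‖gradJ‖ ≤ ‖dk - gradJ‖) :
    -inner ℝ gradJ dk / ‖dk‖ ≤ -(1 / 3) * ‖gradJ‖ + (8 / 3) * ‖dk - gradJ‖ := by
  -- Cauchy–Schwarz bounds the left side by ‖gradJ‖, and `h` is exactly `‖gradJ‖ ≤ -‖gradJ‖/3 + 8‖dk - gradJ‖/3`.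
  linarith [neg_real_inner_div_norm_le gradJ dk]

theorem normalized_descent_large_error (d : ℕ) (hd : 0 < d)
    (gradJ dk : EuclideanSpace ℝ (Fin d)) (hdk : dk ≠ 0)
    (h : (1 / 2) * ‖gradJ‖ ≤ ‖dk - gradJ‖) :
    -inner ℝ gradJ dk / ‖dk‖ ≤ -(1 / 3) * ‖gradJ‖ + (8 / 3) * ‖dk - gradJ‖ :=
  normalized_descent_large_error_general d gradJ dk h
end

section
/- For any d ≥ 1 and any vectors g, v ∈ ℝ^d with v ≠ 0, −⟨g, v⟩/‖v‖ ≤ −(1/3)‖g‖ + (8/3)‖v − g‖. -/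
/-!
Writing `g = v - (v - g)` gives `⟪g, v⟫ ≥ ‖v‖² - ‖v - g‖ ‖v‖`, so the normalized descent
`-⟪g, v⟫ / ‖v‖` is at most `‖v - g‖ - ‖v‖ ≤ 2 ‖v - g‖ - ‖g‖`, which is stronger than the claim.
-/

section

variable {E : Type*} [NormedAddCommGroup E] [InnerProductSpace ℝ E]

theorem neg_inner_div_norm_le_norm_sub_sub_norm (g v : E) :
    -inner ℝ g v / ‖v‖ ≤ ‖v - g‖ - ‖v‖ := by
  rcases eq_or_ne v 0 with rfl | hv
  · simp
  have hv_pos : 0 < ‖v‖ := norm_pos_iff.mpr hv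
  have h_inner : -inner ℝ g v = inner ℝ (v - g) v - ‖v‖ ^ 2 := by
    rw [inner_sub_left, real_inner_self_eq_norm_sq]; ring
  rw [div_le_iff₀ hv_pos, h_inner]
  nlinarith [real_inner_le_norm (v - g) v]

theorem neg_inner_div_norm_le_two_mul_norm_sub_sub_norm (g v : E) :
    -inner ℝ g v / ‖v‖ ≤ 2 * ‖v - g‖ - ‖g‖ := by
  have h_triangle : ‖g‖ ≤ ‖v‖ + ‖v - g‖ := by
    simpa using norm_sub_le v (v - g)
  linarith [neg_inner_div_norm_le_norm_sub_sub_norm g v]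

end

theorem normalized_descent_general (d : ℕ)
    (g v : EuclideanSpace ℝ (Fin d)) :
    -inner ℝ g v / ‖v‖ ≤ -(1 / 3) * ‖g‖ + (8 / 3) * ‖v - g‖ := by
  linarith [neg_inner_div_norm_le_two_mul_norm_sub_sub_norm g v, norm_nonneg g,
    norm_nonneg (v - g)]

theorem normalized_descent (d : ℕ) (hd : 1 ≤ d)
    (g v : EuclideanSpace ℝ (Fin d)) (hv : v ≠ 0) :
    -inner ℝ g v / ‖v‖ ≤ -(1 / 3) * ‖g‖ + (8 / 3) * ‖v - g‖ :=
  normalized_descent_general d g v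
end

section
/- Let π, π' be policies on a finite MDP with state space S and action space A, i.e., for each s ∈ S, π(·|s) and π'(·|s) are probability distributions on A. Suppose the Markov chain induced by π has stationary distribution d^π, J^π = ∑_{s,a} d^π(s)·π(a|s)·r(s,a) and J^{π'} = ∑_{s,a} d^{π'}(s)·π'(a|s)·r(s,a) are the average rewards, and Q^{π'} : S × A → ℝ satisfies the Bellman equation Q^{π'}(s,a) = r(s,a) − J^{π'} + ∑_{s'} P(s'|s,a)·V^{π'}(s') with V^{π'}(s) = ∑_a π'(a|s)·Q^{π'}(s,a). Then J^π − J^{π'} = ∑_s ∑_a d^π(s)·(π(a|s) − π'(a|s))·Q^{π'}(s,a). -/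
open Finset in
theorem performance_difference {S A : Type*} [Fintype S] [Fintype A]
    (r : S → A → ℝ) (P : S → A → S → ℝ)
    (hP : ∀ s a, (∀ s', 0 ≤ P s a s') ∧ ∑ s', P s a s' = 1)
    (π π' : S → A → ℝ)
    (hπ : ∀ s, (∀ a, 0 ≤ π s a) ∧ ∑ a, π s a = 1)
    (hπ' : ∀ s, (∀ a, 0 ≤ π' s a) ∧ ∑ a, π' s a = 1)
    (dπ : S → ℝ) (hd : ∀ s, 0 ≤ dπ s) (hdsum : ∑ s, dπ s = 1)
    (hstat : ∀ s', ∑ s, dπ s * (∑ a, π s a * P s a s') = dπ s')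
    (Jπ Jπ' : ℝ)
    (hJπ : Jπ = ∑ s, ∑ a, dπ s * π s a * r s a)
    (dπ' : S → ℝ) (hd' : ∀ s, 0 ≤ dπ' s) (hd'sum : ∑ s, dπ' s = 1)
    (hJπ' : Jπ' = ∑ s, ∑ a, dπ' s * π' s a * r s a)
    (Q : S → A → ℝ) (Vfun : S → ℝ)
    (hBellman : ∀ s a, Q s a = r s a - Jπ' + ∑ s', P s a s' * Vfun s')
    (hV : ∀ s, Vfun s = ∑ a, π' s a * Q s a) :
    Jπ - Jπ' = ∑ s, ∑ a, dπ s * (π s a - π' s a) * Q s a := by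
  have h2 : ∑ s, ∑ a, dπ s * π s a * Jπ' = Jπ' := by
    have : ∀ s, ∑ a, dπ s * π s a * Jπ' = dπ s * Jπ' := fun s => by
      have : ∑ a, dπ s * π s a * Jπ' = dπ s * Jπ' * ∑ a, π s a := by
        rw [Finset.mul_sum]
        exact Finset.sum_congr rfl fun a _ => by ring
      rw [this, (hπ s).2, mul_one]
    simp_rw [this, ← Finset.sum_mul, hdsum, one_mul]
  have h3 : ∑ s, ∑ a, dπ s * π s a * (∑ s', P s a s' * Vfun s')
      = ∑ s, dπ s * Vfun s := by
    calc ∑ s, ∑ a, dπ s * π s a * (∑ s', P s a s' * Vfun s')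
        = ∑ s, ∑ a, ∑ s', dπ s * π s a * P s a s' * Vfun s' := by
          refine Finset.sum_congr rfl fun s _ => Finset.sum_congr rfl fun a _ => ?_
          rw [Finset.mul_sum]
          exact Finset.sum_congr rfl fun s' _ => by ring
      _ = ∑ s', ∑ s, ∑ a, dπ s * π s a * P s a s' * Vfun s' := by
          exact (Finset.sum_congr rfl fun s _ => Finset.sum_comm).trans
            Finset.sum_comm
      _ = ∑ s', (∑ s, dπ s * ∑ a, π s a * P s a s') * Vfun s' := by
          refine Finset.sum_congr rfl fun s' _ => ?_
          rw [Finset.sum_mul]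
          refine Finset.sum_congr rfl fun s _ => ?_
          rw [Finset.mul_sum, Finset.sum_mul]
          exact Finset.sum_congr rfl fun a _ => by ring
      _ = ∑ s, dπ s * Vfun s := by simp_rw [hstat]
  have hX : ∑ s, ∑ a, dπ s * π s a * Q s a
      = Jπ - Jπ' + ∑ s, dπ s * Vfun s := by
    have h1 : ∀ s a, dπ s * π s a * Q s a
        = dπ s * π s a * r s a - dπ s * π s a * Jπ'
          + dπ s * π s a * (∑ s', P s a s' * Vfun s') := by
      intro s a; rw [hBellman s a]; ring
    simp_rw [h1, Finset.sum_add_distrib, Finset.sum_sub_distrib, h2, h3, ← hJπ]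
  have hY : ∑ s, ∑ a, dπ s * π' s a * Q s a = ∑ s, dπ s * Vfun s := by
    refine Finset.sum_congr rfl fun s _ => ?_
    rw [hV s, Finset.mul_sum]
    exact Finset.sum_congr rfl fun a _ => by ring
  have hsplit : ∀ s a, dπ s * (π s a - π' s a) * Q s a
      = dπ s * π s a * Q s a - dπ s * π' s a * Q s a := fun s a => by ring
  simp_rw [hsplit, Finset.sum_sub_distrib, hX, hY]
  ring
end

section
/- Let π, π' be policies on a finite MDP with the assumptions of the performance-difference lemma (stationary distribution d^π for π, relative value functions V^{π'}, Q^{π'}, advantage A^{π'}(s,a) = Q^{π'}(s,a) − V^{π'}(s)). Then J^π − J^{π'} = ∑_s d^π(s) ∑_a π(a|s)·A^{π'}(s,a). -/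
open Finset in
theorem performance_difference_advantage {S A : Type*} [Fintype S] [Fintype A]
    (r : S → A → ℝ) (P : S → A → S → ℝ)
    (hP : ∀ s a, (∀ s', 0 ≤ P s a s') ∧ ∑ s', P s a s' = 1)
    (π π' : S → A → ℝ)
    (hπ : ∀ s, (∀ a, 0 ≤ π s a) ∧ ∑ a, π s a = 1)
    (hπ' : ∀ s, (∀ a, 0 ≤ π' s a) ∧ ∑ a, π' s a = 1)
    (dπ : S → ℝ) (hd : ∀ s, 0 ≤ dπ s) (hdsum : ∑ s, dπ s = 1)
    (hstat : ∀ s', ∑ s, dπ s * (∑ a, π s a * P s a s') = dπ s')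
    (Jπ Jπ' : ℝ)
    (hJπ : Jπ = ∑ s, ∑ a, dπ s * π s a * r s a)
    (dπ' : S → ℝ) (hd' : ∀ s, 0 ≤ dπ' s) (hd'sum : ∑ s, dπ' s = 1)
    (hJπ' : Jπ' = ∑ s, ∑ a, dπ' s * π' s a * r s a)
    (Q : S → A → ℝ) (Vfun : S → ℝ) (Adv : S → A → ℝ)
    (hBellman : ∀ s a, Q s a = r s a - Jπ' + ∑ s', P s a s' * Vfun s')
    (hV : ∀ s, Vfun s = ∑ a, π' s a * Q s a)
    (hAdv : ∀ s a, Adv s a = Q s a - Vfun s) :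
    Jπ - Jπ' = ∑ s, dπ s * ∑ a, π s a * Adv s a := by
  have key : ∀ s, ∑ a, π s a * Adv s a =
      (∑ a, π s a * r s a) - Jπ' + (∑ a, π s a * ∑ s', P s a s' * Vfun s') - Vfun s := by
    intro s
    have h1 : ∀ a, π s a * Adv s a =
        π s a * r s a - π s a * Jπ' + π s a * (∑ s', P s a s' * Vfun s')
        - π s a * Vfun s := by
      intro a; rw [hAdv, hBellman]; ring
    rw [Finset.sum_congr rfl fun a _ => h1 a]
    simp only [Finset.sum_add_distrib, Finset.sum_sub_distrib,
      ← Finset.sum_mul, (hπ s).2, one_mul]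
  rw [Finset.sum_congr rfl fun s _ => by rw [key s]]
  have hJπ'' : ∑ s, dπ s * ∑ a, π s a * r s a = Jπ := by
    rw [hJπ]; congr 1; ext s; rw [Finset.mul_sum]; congr 1; ext a; ring
  have hcross : ∑ s, dπ s * ∑ a, π s a * ∑ s', P s a s' * Vfun s'
      = ∑ s, dπ s * Vfun s := by
    have : ∀ s, dπ s * ∑ a, π s a * ∑ s', P s a s' * Vfun s'
        = ∑ s', (dπ s * ∑ a, π s a * P s a s') * Vfun s' := by
      intro s
      simp only [Finset.mul_sum, Finset.sum_mul]
      rw [Finset.sum_comm]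
      congr 1; ext a; congr 1; ext s'; ring
    rw [Finset.sum_congr rfl fun s _ => this s, Finset.sum_comm]
    congr 1; ext s'
    rw [← Finset.sum_mul]
    congr 1
    exact hstat s'
  calc Jπ - Jπ'
      = (∑ s, dπ s * ∑ a, π s a * r s a) - (∑ s, dπ s) * Jπ'
        + (∑ s, dπ s * ∑ a, π s a * ∑ s', P s a s' * Vfun s')
        - ∑ s, dπ s * Vfun s := by
        rw [hJπ'', hcross, hdsum]; ring
    _ = ∑ s, dπ s * ((∑ a, π s a * r s a) - Jπ'
        + (∑ a, π s a * ∑ s', P s a s' * Vfun s') - Vfun s) := by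
        rw [Finset.sum_mul]
        simp only [mul_sub, mul_add, Finset.sum_add_distrib, Finset.sum_sub_distrib]
end

section
/- Let J̄ : ℝ^d → ℝ be twice differentiable with ‖∇²J̄(θ)‖ ≤ L for all θ (L-smooth), and let J : ℝ^d → ℝ satisfy, for fixed θ₀ ∈ ℝ^d and constants ε₁, ε₂ ≥ 0: (a) |J(θ) − J̄(θ)| ≤ ε₁‖θ − θ₀‖ for all θ, and (b) ‖∇J(θ) − ∇J̄(θ)‖ ≤ ε₂ for all θ. Then for any real J* and all θ, θ̄ ∈ ℝ^d: (J* − J(θ̄)) ≤ (J* − J(θ)) − ⟨∇J(θ), θ̄ − θ⟩ + (L/2)‖θ̄ − θ‖² + ε₁(‖θ − θ₀‖ + ‖θ̄ − θ₀‖) + ε₂‖θ − θ̄‖. -/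
open Set

lemma descent_lower {d : ℕ}
    (Jbar : EuclideanSpace ℝ (Fin d) → ℝ) (L : ℝ)
    (hJbar : ContDiff ℝ 2 Jbar)
    (hHess : ∀ θ, ‖fderiv ℝ (fun θ' => fderiv ℝ Jbar θ') θ‖ ≤ L)
    (x y : EuclideanSpace ℝ (Fin d)) :
    Jbar x + fderiv ℝ Jbar x (y - x) - L / 2 * ‖y - x‖ ^ 2 ≤ Jbar y := by
  set v := y - x with hv
  set F := fun z => fderiv ℝ Jbar z with hFdef
  have hdiff : Differentiable ℝ Jbar := hJbar.differentiable (by norm_num)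
  have hF : Differentiable ℝ F :=
    (hJbar.fderiv_right (m := 1) (by norm_num)).differentiable (by norm_num)
  have hLip : ∀ a b, ‖F b - F a‖ ≤ L * ‖b - a‖ := fun a b =>
    convex_univ.norm_image_sub_le_of_norm_fderiv_le (fun z _ => hF z)
      (fun z _ => hHess z) trivial trivial
  set h : ℝ → ℝ := fun t => Jbar (x + t • v) - t * (F x v) + L / 2 * t ^ 2 * ‖v‖ ^ 2
    with hh
  have hderiv : ∀ t, HasDerivAt h (F (x + t • v) v - F x v + L * t * ‖v‖ ^ 2) t := by
    intro t
    have hc : HasDerivAt (fun t : ℝ => x + t • v) v t := by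
      simpa using ((hasDerivAt_id t).smul_const v).const_add x
    have h1 : HasDerivAt (fun t => Jbar (x + t • v)) (F (x + t • v) v) t :=
      (hdiff (x + t • v)).hasFDerivAt.comp_hasDerivAt t hc
    have h2 : HasDerivAt (fun t : ℝ => t * (F x v)) (F x v) t := by
      simpa using (hasDerivAt_id t).mul_const (F x v)
    have h3 : HasDerivAt (fun t : ℝ => L / 2 * t ^ 2 * ‖v‖ ^ 2)
        (L * t * ‖v‖ ^ 2) t := by
      have := ((hasDerivAt_pow 2 t).const_mul (L / 2)).mul_const (‖v‖ ^ 2)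
      refine this.congr_deriv ?_
      ring
    exact (h1.sub h2).add h3
  have hdh : Differentiable ℝ h := fun t => (hderiv t).differentiableAt
  have hmono : MonotoneOn h (Icc (0 : ℝ) 1) := by
    apply monotoneOn_of_deriv_nonneg (convex_Icc 0 1) hdh.continuous.continuousOn
      hdh.differentiableOn
    intro t ht
    rw [interior_Icc] at ht
    rw [(hderiv t).deriv]
    have e : F (x + t • v) v - F x v = (F (x + t • v) - F x) v := by simp
    have h1 := (F (x + t • v) - F x).le_opNorm v
    have h2 := hLip x (x + t • v)
    have h3 : ‖x + t • v - x‖ = t * ‖v‖ := by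
      rw [add_sub_cancel_left, norm_smul, Real.norm_eq_abs, abs_of_pos ht.1]
    rw [h3] at h2
    have h4 : ‖(F (x + t • v) - F x) v‖ ≤ L * t * ‖v‖ ^ 2 := by
      calc ‖(F (x + t • v) - F x) v‖ ≤ ‖F (x + t • v) - F x‖ * ‖v‖ := h1
        _ ≤ L * (t * ‖v‖) * ‖v‖ := by
            apply mul_le_mul_of_nonneg_right h2 (norm_nonneg v)
        _ = L * t * ‖v‖ ^ 2 := by ring
    have h5 : |F (x + t • v) v - F x v| ≤ L * t * ‖v‖ ^ 2 := by
      rw [e]; exact h4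
    have := neg_abs_le (F (x + t • v) v - F x v)
    linarith
  have key := hmono (Set.mem_Icc.2 ⟨le_refl 0, zero_le_one⟩)
    (Set.mem_Icc.2 ⟨zero_le_one, le_refl 1⟩) zero_le_one
  have h0 : h 0 = Jbar x := by simp [hh]
  have h1 : h 1 = Jbar y - F x v + L / 2 * ‖v‖ ^ 2 := by
    simp [hh, hv]
  rw [h0, h1] at key
  have : F x v = fderiv ℝ Jbar x (y - x) := rfl
  linarith [key]

theorem approx_smoothness {d : ℕ}
    (Jbar J : EuclideanSpace ℝ (Fin d) → ℝ)
    (L ε₁ ε₂ : ℝ) (hL : 0 ≤ L) (hε₁ : 0 ≤ ε₁) (hε₂ : 0 ≤ ε₂)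
    (hJbar : ContDiff ℝ 2 Jbar)
    (hHess : ∀ θ, ‖fderiv ℝ (fun θ' => fderiv ℝ Jbar θ') θ‖ ≤ L)
    (hJ : Differentiable ℝ J)
    (θ₀ : EuclideanSpace ℝ (Fin d))
    (hclose : ∀ θ, |J θ - Jbar θ| ≤ ε₁ * ‖θ - θ₀‖)
    (hgrad : ∀ θ, ‖gradient J θ - gradient Jbar θ‖ ≤ ε₂)
    (Jstar : ℝ) (θ θbar : EuclideanSpace ℝ (Fin d)) :
    Jstar - J θbar ≤ (Jstar - J θ) - inner ℝ (gradient J θ) (θbar - θ)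
      + (L / 2) * ‖θbar - θ‖ ^ 2
      + ε₁ * (‖θ - θ₀‖ + ‖θbar - θ₀‖) + ε₂ * ‖θ - θbar‖ := by
  have hdiff : Differentiable ℝ Jbar := hJbar.differentiable (by norm_num)
  set v := θbar - θ with hv
  have hfg : fderiv ℝ Jbar θ v = (inner ℝ (gradient Jbar θ) v : ℝ) := by
    have hg := (hdiff θ).hasGradientAt
    rw [hasGradientAt_iff_hasFDerivAt] at hg
    rw [hg.fderiv]
    exact InnerProductSpace.toDual_apply_apply
  have hdescent := descent_lower Jbar L hJbar hHess θ θbar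
  rw [← hv] at hdescent
  rw [hfg] at hdescent
  have hinner : (inner ℝ (gradient Jbar θ) v : ℝ)
      = inner ℝ (gradient J θ) v - inner ℝ (gradient J θ - gradient Jbar θ) v := by
    rw [inner_sub_left]; ring
  have hbnd : |(inner ℝ (gradient J θ - gradient Jbar θ) v : ℝ)| ≤ ε₂ * ‖v‖ := by
    calc |(inner ℝ (gradient J θ - gradient Jbar θ) v : ℝ)|
        ≤ ‖gradient J θ - gradient Jbar θ‖ * ‖v‖ := abs_real_inner_le_norm _ _
      _ ≤ ε₂ * ‖v‖ := mul_le_mul_of_nonneg_right (hgrad θ) (norm_nonneg v)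
  have habs := abs_le.1 hbnd
  have hA := abs_le.1 (hclose θbar)
  have hB := abs_le.1 (hclose θ)
  have hrev : ‖θ - θbar‖ = ‖v‖ := by rw [hv, norm_sub_rev]
  rw [hrev]
  rw [hinner] at hdescent
  linarith
end
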